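/- Let γ be a real number with 3 < γ < 4. Then for every integer q ≥ 1: q^{γ−2} · ∑_{s=1}^∞ ∑_{j = s·q + 1}^∞ (j − s·q)^{−4} · j^{−(γ−1)} ≤ ζ(4) · ζ(γ−1) / q, where ζ(t) = ∑_{n=1}^∞ n^{−t}; in particular the double series converges. -/

import Mathlib

/-!
Since `j > sq` forces `j^{−(γ−1)} ≤ (sq)^{−(γ−1)} = s^{−(γ−1)} q^{−(γ−1)}`, the `s`-th inner sum is
at most `s^{−(γ−1)} q^{−(γ−1)} ∑_{j>sq} (j−sq)⁻⁴ = s^{−(γ−1)} q^{−(γ−1)} ζ(4)`. Summing over `s`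
gives `ζ(γ−1) ζ(4) q^{−(γ−1)}`, and `q^{γ−2} q^{−(γ−1)} = 1/q`.
-/

/-- The term `(j − sq)⁻⁴ j^{−(γ−1)}` of the double sum over `j > sq`
(here `s ≥ 1` is encoded as `s + 1` with `s : ℕ`). -/
noncomputable def termII (γ : ℝ) (q s j : ℕ) : ℝ :=
  if (s + 1) * q < j then
    ((j : ℝ) - (((s + 1) * q : ℕ) : ℝ)) ^ (-(4 : ℝ)) * (j : ℝ) ^ (-(γ - 1))
  else 0

open Finset

lemma summable_nat_add_one_rpow_neg {p : ℝ} (hp : 1 < p) :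
    Summable fun n : ℕ => ((n : ℝ) + 1) ^ (-p) := by
  have := (summable_nat_add_iff 1).mpr (Real.summable_nat_rpow.mpr (neg_lt_neg hp))
  simpa only [Nat.cast_add, Nat.cast_one] using this

noncomputable def shiftedRpow (p : ℝ) (m j : ℕ) : ℝ :=
  if m < j then ((j : ℝ) - m) ^ (-p) else 0

lemma shiftedRpow_add (p : ℝ) (m k : ℕ) :
    shiftedRpow p m (k + (m + 1)) = ((k : ℝ) + 1) ^ (-p) := by
  rw [shiftedRpow, if_pos (by omega)]
  push_cast
  ring_nf

lemma hasSum_shiftedRpow {p : ℝ} (hp : 1 < p) (m : ℕ) :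
    HasSum (shiftedRpow p m) (∑' n : ℕ, ((n : ℝ) + 1) ^ (-p)) := by
  have hvanish : ∑ j ∈ range (m + 1), shiftedRpow p m j = 0 :=
    sum_eq_zero fun j hj => if_neg (by simp only [mem_range] at hj; omega)
  have hshift :
      HasSum (fun k => shiftedRpow p m (k + (m + 1))) (∑' n : ℕ, ((n : ℝ) + 1) ^ (-p)) := by
    simpa only [shiftedRpow_add] using (summable_nat_add_one_rpow_neg hp).hasSum
  simpa only [hvanish, add_zero] using (hasSum_nat_add_iff (m + 1)).mp hshift

lemma termII_nonneg (γ : ℝ) (q s j : ℕ) : 0 ≤ termII γ q s j := by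
  unfold termII
  split_ifs with h
  · exact mul_nonneg (Real.rpow_nonneg (sub_nonneg.mpr (Nat.cast_le.mpr h.le)) _)
      (Real.rpow_nonneg (Nat.cast_nonneg j) _)
  · exact le_rfl

lemma termII_le_mul_shiftedRpow {γ : ℝ} (hγ : 1 ≤ γ) {q : ℕ} (hq : 1 ≤ q) (s j : ℕ) :
    termII γ q s j ≤
      (((s : ℝ) + 1) ^ (-(γ - 1)) * (q : ℝ) ^ (-(γ - 1))) * shiftedRpow 4 ((s + 1) * q) j := by
  unfold termII shiftedRpow
  split_ifs with h
  · have hm : (0 : ℝ) < (((s + 1) * q : ℕ) : ℝ) := by exact_mod_cast Nat.mul_pos s.succ_pos hq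
    have hj : (j : ℝ) ^ (-(γ - 1)) ≤ (((s + 1) * q : ℕ) : ℝ) ^ (-(γ - 1)) :=
      Real.rpow_le_rpow_of_nonpos hm (Nat.cast_le.mpr h.le) (by linarith)
    rw [← Real.mul_rpow (by positivity) (Nat.cast_nonneg q), mul_comm (_ ^ (-(4 : ℝ)))]
    have hjm : ((s : ℝ) + 1) * q ≤ j := by exact_mod_cast h.le
    push_cast at hj ⊢
    exact mul_le_mul_of_nonneg_right hj (Real.rpow_nonneg (sub_nonneg.mpr hjm) _)
  · rw [mul_zero]

lemma summable_and_tsum_tsum_le_of_le_mul {f g : ℕ → ℕ → ℝ} {a : ℕ → ℝ} {C : ℝ}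
    (hf : ∀ s j, 0 ≤ f s j) (hfg : ∀ s j, f s j ≤ a s * g s j)
    (hg : ∀ s, HasSum (g s) C) (ha : Summable a) :
    (∀ s, Summable (f s)) ∧ Summable (fun s => ∑' j, f s j) ∧
      ∑' s, ∑' j, f s j ≤ (∑' s, a s) * C := by
  have hrow : ∀ s, Summable (f s) := fun s =>
    Summable.of_nonneg_of_le (hf s) (hfg s) ((hg s).summable.mul_left (a s))
  have hrow_le : ∀ s, ∑' j, f s j ≤ a s * C := fun s => by
    rw [← (hg s).tsum_eq, ← tsum_mul_left]
    exact (hrow s).tsum_le_tsum (hfg s) ((hg s).summable.mul_left (a s))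
  have hcol : Summable (fun s => ∑' j, f s j) :=
    Summable.of_nonneg_of_le (fun s => tsum_nonneg (hf s)) hrow_le (ha.mul_right C)
  refine ⟨hrow, hcol, ?_⟩
  rw [← tsum_mul_right]
  exact hcol.tsum_le_tsum hrow_le (ha.mul_right C)

theorem term_II_estimate_general
    (γ : ℝ) (hγ1 : 3 < γ) :
    ∀ q : ℕ, 1 ≤ q →
      (∀ s : ℕ, Summable (fun j : ℕ => termII γ q s j)) ∧
      Summable (fun s : ℕ => ∑' j : ℕ, termII γ q s j) ∧
      (q : ℝ) ^ (γ - 2) * (∑' s : ℕ, ∑' j : ℕ, termII γ q s j) ≤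
        (∑' n : ℕ, ((n : ℝ) + 1) ^ (-(4 : ℝ))) *
          (∑' n : ℕ, ((n : ℝ) + 1) ^ (-(γ - 1))) / (q : ℝ) := by
  intro q hq
  have hq0 : (0 : ℝ) < q := by exact_mod_cast hq
  obtain ⟨hrow, hcol, hle⟩ := summable_and_tsum_tsum_le_of_le_mul (termII_nonneg γ q)
    (termII_le_mul_shiftedRpow (by linarith) hq)
    (fun s => hasSum_shiftedRpow (by norm_num) ((s + 1) * q))
    ((summable_nat_add_one_rpow_neg (by linarith : 1 < γ - 1)).mul_right ((q : ℝ) ^ (-(γ - 1))))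
  refine ⟨hrow, hcol, ?_⟩
  have hpow : (q : ℝ) ^ (γ - 2) * (q : ℝ) ^ (-(γ - 1)) = (q : ℝ)⁻¹ := by
    rw [← Real.rpow_add hq0, ← Real.rpow_neg_one]
    ring_nf
  calc (q : ℝ) ^ (γ - 2) * (∑' s : ℕ, ∑' j : ℕ, termII γ q s j)
      ≤ (q : ℝ) ^ (γ - 2) * ((∑' s : ℕ, ((s : ℝ) + 1) ^ (-(γ - 1)) * (q : ℝ) ^ (-(γ - 1))) *
          ∑' n : ℕ, ((n : ℝ) + 1) ^ (-(4 : ℝ))) := by gcongr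
    _ = _ := by
      rw [tsum_mul_right, div_eq_mul_inv, ← hpow]
      ring

/-- Estimate of term II: for `3 < γ < 4` and every `q ≥ 1`,
`q^{γ−2} ∑_{s≥1} ∑_{j>sq} (j−sq)⁻⁴ j^{−(γ−1)} ≤ ζ(4) ζ(γ−1) / q`;
in particular the double series converges. -/
theorem term_II_estimate
    (γ : ℝ) (hγ1 : 3 < γ) (hγ2 : γ < 4) :
    ∀ q : ℕ, 1 ≤ q →
      (∀ s : ℕ, Summable (fun j : ℕ => termII γ q s j)) ∧
      Summable (fun s : ℕ => ∑' j : ℕ, termII γ q s j) ∧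
      (q : ℝ) ^ (γ - 2) * (∑' s : ℕ, ∑' j : ℕ, termII γ q s j) ≤
        (∑' n : ℕ, ((n : ℝ) + 1) ^ (-(4 : ℝ))) *
          (∑' n : ℕ, ((n : ℝ) + 1) ^ (-(γ - 1))) / (q : ℝ) :=
  term_II_estimate_general γ hγ1
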